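/- Let γ > 0 and b > 0. For every f ∈ C([0,∞]) and every t > 0, the function P_t^{γ,b} f is continuously differentiable on [0,∞) and for every x ≥ 0 one has √x · | (P_t^{γ,b} f)'(x) | ≤ (2√2 / √(γ t)) · ‖f‖_∞. -/

import Mathlib

/-!
With `u = x / (γ t)` one has `P_t f(x) = e^{-u} ∑ a_m u^m` with `|a_m| ≤ ‖f‖_∞ / m!`, since the
`m`-th integral is at most `‖f‖_∞ Γ(m + b/γ)`. Differentiating termwise,
`(e^{-u} ∑ a_m u^m)' = e^{-u} ∑ a_m u^m (m - u) / u`, so `u |∂_u|` is at most `‖f‖_∞` times the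
mean absolute deviation of the Poisson law of parameter `u`. From `2√u |m - u| ≤ (m - u)² + u` and
the Poisson variance `u`, that deviation is at most `√u`. Hence `√u |∂_u| ≤ ‖f‖_∞`, that is
`√x |(P_t f)'(x)| ≤ ‖f‖_∞ / √(γ t)`.
-/

open MeasureTheory

/-- The semigroup `P_t^{γ,b}` (case `b > 0`):
`P_t^{γ,b} f(x) = e^{−x/(γt)} ∑_{m=0}^∞ (x/(γt))^m (1/(m! Γ(m + b/γ)))
  ∫_0^∞ e^{−z} z^{m + b/γ − 1} f(γzt) dz`. -/
noncomputable def Psem (γ b t : ℝ) (f : ℝ → ℝ) (x : ℝ) : ℝ :=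
  Real.exp (-x / (γ * t)) *
    ∑' m : ℕ, (x / (γ * t)) ^ m * (1 / ((m.factorial : ℝ) * Real.Gamma ((m : ℝ) + b / γ))) *
      ∫ z in Set.Ioi (0:ℝ), Real.exp (-z) * z ^ ((m : ℝ) + b / γ - 1) * f (γ * z * t)

/-- The supremum norm of `f` over `[0, ∞)`. -/
noncomputable def supIci (f : ℝ → ℝ) : ℝ := ⨆ y : Set.Ici (0:ℝ), |f (y : ℝ)|

open Real Filter Topology Nat Set

lemma hasSum_pow_div_factorial (u : ℝ) : HasSum (fun m : ℕ => u ^ m / m !) (exp u) := by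
  rw [exp_eq_exp_ℝ]
  exact NormedSpace.expSeries_div_hasSum_exp u

lemma hasSum_natCast_mul_pow_div_factorial (u : ℝ) :
    HasSum (fun m : ℕ => m * u ^ m / m !) (u * exp u) := by
  have hshift : (fun m : ℕ => ((m + 1 : ℕ) : ℝ) * u ^ (m + 1) / (m + 1)!) =
      fun m => u * (u ^ m / m !) := by
    funext m
    rw [factorial_succ]
    push_cast
    field_simp
    ring
  rw [← hasSum_nat_add_iff' 1, hshift]
  simpa using (hasSum_pow_div_factorial u).mul_left u

lemma hasSum_natCast_sq_mul_pow_div_factorial (u : ℝ) :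
    HasSum (fun m : ℕ => m ^ 2 * u ^ m / m !) ((u ^ 2 + u) * exp u) := by
  have hshift : (fun m : ℕ => ((m + 1 : ℕ) : ℝ) ^ 2 * u ^ (m + 1) / (m + 1)!) =
      fun m => u * (m * u ^ m / m ! + u ^ m / m !) := by
    funext m
    rw [factorial_succ]
    push_cast
    field_simp
    ring
  have h := ((hasSum_natCast_mul_pow_div_factorial u).add (hasSum_pow_div_factorial u)).mul_left u
  rw [show u * (u * exp u + exp u) = (u ^ 2 + u) * exp u by ring] at h
  rw [← hasSum_nat_add_iff' 1, hshift]
  simpa using h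

lemma hasSum_pow_div_factorial_mul_sub_sq (u : ℝ) :
    HasSum (fun m : ℕ => u ^ m / m ! * (m - u) ^ 2) (u * exp u) := by
  have h := ((hasSum_natCast_sq_mul_pow_div_factorial u).sub
    ((hasSum_natCast_mul_pow_div_factorial u).mul_left (2 * u))).add
    ((hasSum_pow_div_factorial u).mul_left (u ^ 2))
  rw [show u * exp u = (u ^ 2 + u) * exp u - 2 * u * (u * exp u) + u ^ 2 * exp u by ring]
  exact h.congr_fun fun m => by ring

lemma abs_le_sq_add_sq_div {s : ℝ} (hs : 0 < s) (a : ℝ) : |a| ≤ (a ^ 2 + s ^ 2) / (2 * s) := by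
  rw [le_div_iff₀ (by positivity), ← sq_abs a]
  nlinarith [sq_nonneg (|a| - s)]

lemma summable_and_tsum_pow_div_factorial_mul_abs_sub_le {u : ℝ} (hu : 0 < u) :
    Summable (fun m : ℕ => u ^ m / m ! * |(m : ℝ) - u|) ∧
      ∑' m : ℕ, u ^ m / m ! * |(m : ℝ) - u| ≤ √u * exp u := by
  have hs : 0 < √u := sqrt_pos.mpr hu
  have hmaj := ((hasSum_pow_div_factorial_mul_sub_sq u).add
    ((hasSum_pow_div_factorial u).mul_left u)).div_const (2 * √u)
  have hle : ∀ m : ℕ, u ^ m / m ! * |(m : ℝ) - u| ≤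
      (u ^ m / m ! * ((m : ℝ) - u) ^ 2 + u * (u ^ m / m !)) / (2 * √u) := by
    intro m
    calc u ^ m / m ! * |(m : ℝ) - u|
        ≤ u ^ m / m ! * ((((m : ℝ) - u) ^ 2 + √u ^ 2) / (2 * √u)) := by
          gcongr
          exact abs_le_sq_add_sq_div hs _
      _ = _ := by rw [sq_sqrt hu.le]; ring
  have hsum : Summable (fun m : ℕ => u ^ m / m ! * |(m : ℝ) - u|) :=
    hmaj.summable.of_nonneg_of_le (fun m => by positivity) hle
  refine ⟨hsum, (hsum.tsum_le_tsum hle hmaj.summable).trans_eq ?_⟩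
  rw [hmaj.tsum_eq]
  field_simp
  rw [sq_sqrt hu.le]
  ring

section PowerSeries

variable {a : ℕ → ℝ} {M : ℝ}

lemma nonneg_of_abs_le_div_factorial (ha : ∀ m, |a m| ≤ M / m !) : 0 ≤ M := by
  simpa using (abs_nonneg _).trans (ha 0)

lemma summable_mul_pow_of_abs_le_div_factorial (ha : ∀ m, |a m| ≤ M / m !) (u : ℝ) :
    Summable fun m => a m * u ^ m := by
  refine Summable.of_norm_bounded ((summable_pow_div_factorial |u|).mul_left M) fun m => ?_
  rw [norm_mul, norm_pow, norm_eq_abs, norm_eq_abs]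
  calc |a m| * |u| ^ m ≤ M / m ! * |u| ^ m := by gcongr; exact ha m
    _ = M * (|u| ^ m / m !) := by ring

lemma norm_mul_natCast_mul_pow_sub_one_le (ha : ∀ m, |a m| ≤ M / m !) {R v : ℝ} (hv : |v| ≤ R)
    (m : ℕ) : ‖a m * (m * v ^ (m - 1))‖ ≤ M * (m * max 1 R ^ m / m !) := by
  have hpow : |v| ^ (m - 1) ≤ max 1 R ^ m :=
    (pow_le_pow_left₀ (abs_nonneg v) (hv.trans (le_max_right 1 R)) _).trans
      (pow_le_pow_right₀ (le_max_left 1 R) (m.sub_le 1))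
  have hM := nonneg_of_abs_le_div_factorial ha
  rw [norm_eq_abs, abs_mul, abs_mul, abs_pow, Nat.abs_cast]
  calc |a m| * (m * |v| ^ (m - 1)) ≤ M / m ! * (m * max 1 R ^ m) := by
        gcongr
        exact ha m
    _ = M * (m * max 1 R ^ m / m !) := by ring

lemma summable_mul_natCast_mul_pow_sub_one (ha : ∀ m, |a m| ≤ M / m !) (u : ℝ) :
    Summable fun m => a m * (m * u ^ (m - 1)) :=
  Summable.of_norm_bounded ((hasSum_natCast_mul_pow_div_factorial _).summable.mul_left M)
    (norm_mul_natCast_mul_pow_sub_one_le ha le_rfl)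

lemma hasDerivAt_tsum_mul_pow (ha : ∀ m, |a m| ≤ M / m !) (u : ℝ) :
    HasDerivAt (fun v => ∑' m, a m * v ^ m) (∑' m, a m * (m * u ^ (m - 1))) u := by
  have hu : u ∈ Metric.ball (0 : ℝ) (|u| + 1) := by simp
  exact hasDerivAt_tsum_of_isPreconnected
    ((hasSum_natCast_mul_pow_div_factorial _).summable.mul_left M) Metric.isOpen_ball
    (convex_ball _ _).isPreconnected (fun m v _ => (hasDerivAt_pow m v).const_mul (a m))
    (fun m v hv => norm_mul_natCast_mul_pow_sub_one_le ha (mem_ball_zero_iff.mp hv).le m) hu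
    (summable_mul_pow_of_abs_le_div_factorial ha u) hu

lemma continuous_tsum_mul_natCast_mul_pow_sub_one (ha : ∀ m, |a m| ≤ M / m !) :
    Continuous fun u => ∑' m, a m * (m * u ^ (m - 1)) := by
  refine continuous_iff_continuousAt.mpr fun u => ?_
  have hball : ContinuousOn (fun u => ∑' m, a m * (m * u ^ (m - 1)))
      (Metric.ball 0 (|u| + 1)) :=
    continuousOn_tsum (fun m => by fun_prop)
      ((hasSum_natCast_mul_pow_div_factorial _).summable.mul_left M)
      (fun m v hv => norm_mul_natCast_mul_pow_sub_one_le ha (mem_ball_zero_iff.mp hv).le m)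
  exact hball.continuousAt (Metric.isOpen_ball.mem_nhds (by simp))

lemma hasDerivAt_exp_neg_mul_tsum_mul_pow (ha : ∀ m, |a m| ≤ M / m !) (u : ℝ) :
    HasDerivAt (fun v => exp (-v) * ∑' m, a m * v ^ m)
      (exp (-u) * (∑' m, a m * (m * u ^ (m - 1)) - ∑' m, a m * u ^ m)) u :=
  ((hasDerivAt_neg u).exp.mul (hasDerivAt_tsum_mul_pow ha u)).congr_deriv (by ring)

lemma contDiff_exp_neg_mul_tsum_mul_pow (ha : ∀ m, |a m| ≤ M / m !) :
    ContDiff ℝ 1 fun v => exp (-v) * ∑' m, a m * v ^ m := by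
  have hderiv := hasDerivAt_exp_neg_mul_tsum_mul_pow ha
  refine contDiff_one_iff_deriv.mpr ⟨fun u => (hderiv u).differentiableAt, ?_⟩
  rw [funext fun u => (hderiv u).deriv]
  have hS : Continuous fun v => ∑' m, a m * v ^ m :=
    continuous_iff_continuousAt.mpr fun u => (hasDerivAt_tsum_mul_pow ha u).continuousAt
  exact (continuous_neg.rexp).mul ((continuous_tsum_mul_natCast_mul_pow_sub_one ha).sub hS)

lemma natCast_mul_pow_sub_one_sub_pow {u : ℝ} (hu : u ≠ 0) (m : ℕ) :
    (m : ℝ) * u ^ (m - 1) - u ^ m = u ^ m * (m - u) / u := by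
  cases m with
  | zero => field_simp; simp
  | succ k =>
    rw [Nat.add_sub_cancel, pow_succ]
    push_cast
    field_simp

lemma sqrt_mul_abs_exp_neg_mul_tsum_sub_le (ha : ∀ m, |a m| ≤ M / m !) {u : ℝ} (hu : 0 ≤ u) :
    √u * |exp (-u) * (∑' m, a m * (m * u ^ (m - 1)) - ∑' m, a m * u ^ m)| ≤ M := by
  rcases hu.eq_or_lt with rfl | hu
  · simpa using nonneg_of_abs_le_div_factorial ha
  have hM := nonneg_of_abs_le_div_factorial ha
  obtain ⟨hsum, hle⟩ := summable_and_tsum_pow_div_factorial_mul_abs_sub_le hu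
  have hterm : ∀ m : ℕ, ‖a m * (m * u ^ (m - 1) - u ^ m)‖ ≤
      M / u * (u ^ m / m ! * |(m : ℝ) - u|) := by
    intro m
    rw [natCast_mul_pow_sub_one_sub_pow hu.ne', norm_eq_abs, abs_mul, abs_div, abs_mul,
      abs_of_pos hu, abs_of_nonneg (pow_nonneg hu.le m)]
    calc |a m| * (u ^ m * |(m : ℝ) - u| / u) ≤ M / m ! * (u ^ m * |(m : ℝ) - u| / u) := by
          gcongr
          exact ha m
      _ = M / u * (u ^ m / m ! * |(m : ℝ) - u|) := by ring
  have hdiff := tsum_of_norm_bounded (hsum.mul_left (M / u)).hasSum hterm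
  have hS : ∑' m, a m * (m * u ^ (m - 1)) - ∑' m, a m * u ^ m =
      ∑' m, a m * (m * u ^ (m - 1) - u ^ m) := by
    rw [← (summable_mul_natCast_mul_pow_sub_one ha u).tsum_sub
      (summable_mul_pow_of_abs_le_div_factorial ha u)]
    simp_rw [mul_sub]
  rw [tsum_mul_left] at hdiff
  rw [hS, abs_mul, abs_of_pos (exp_pos _), ← norm_eq_abs]
  calc √u * (exp (-u) * ‖∑' m, a m * (m * u ^ (m - 1) - u ^ m)‖)
      ≤ √u * (exp (-u) * (M / u * (√u * exp u))) := by
        gcongr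
        exact hdiff.trans (by gcongr)
    _ = M := by
        rw [exp_neg]
        field_simp
        rw [sq_sqrt hu.le]
        ring

end PowerSeries

lemma abs_integral_exp_neg_mul_rpow_mul_le {F : ℝ → ℝ} {M p : ℝ} (hp : 0 < p)
    (hF : ∀ z, 0 < z → |F z| ≤ M) :
    |∫ z in Ioi 0, exp (-z) * z ^ (p - 1) * F z| ≤ M * Gamma p := by
  rw [Gamma_eq_integral hp, ← integral_const_mul, ← norm_eq_abs]
  refine norm_integral_le_of_norm_le ((GammaIntegral_convergent hp).const_mul M) ?_
  filter_upwards [self_mem_ae_restrict measurableSet_Ioi] with z (hz : 0 < z)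
  rw [norm_mul, norm_of_nonneg (by positivity), norm_eq_abs, mul_comm M]
  exact mul_le_mul_of_nonneg_left (hF z hz) (by positivity)

lemma bddAbove_range_abs_of_continuousOn_Ici {f : ℝ → ℝ} {l : ℝ} (hf : ContinuousOn f (Ici 0))
    (hl : Tendsto f atTop (𝓝 l)) : BddAbove (range fun y : Ici (0 : ℝ) => |f y|) := by
  obtain ⟨A, hA⟩ := eventually_atTop.mp (hl.abs.eventually_le_const (lt_add_one |l|))
  obtain ⟨C, hC⟩ := isCompact_Icc.exists_bound_of_continuousOn
    (hf.mono fun y (hy : y ∈ Icc 0 (max A 0)) => hy.1)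
  refine ⟨max C (|l| + 1), ?_⟩
  rintro _ ⟨⟨y, hy⟩, rfl⟩
  rcases le_total y (max A 0) with h | h
  · exact le_max_of_le_left (hC y ⟨hy, h⟩)
  · exact le_max_of_le_right (hA y ((le_max_left A 0).trans h))

noncomputable def psemCoeff (γ b t : ℝ) (f : ℝ → ℝ) (m : ℕ) : ℝ :=
  1 / (m ! * Gamma (m + b / γ)) * ∫ z in Ioi 0, exp (-z) * z ^ ((m : ℝ) + b / γ - 1) * f (γ * z * t)

lemma psem_eq (γ b t : ℝ) (f : ℝ → ℝ) (x : ℝ) :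
    Psem γ b t f x = exp (-(x / (γ * t))) * ∑' m, psemCoeff γ b t f m * (x / (γ * t)) ^ m := by
  simp only [Psem, psemCoeff, neg_div, mul_comm (_ ^ _), mul_assoc]

lemma abs_psemCoeff_le {γ b t M : ℝ} {f : ℝ → ℝ} (hγ : 0 < γ) (hb : 0 < b) (ht : 0 < t)
    (hM : ∀ y, 0 ≤ y → |f y| ≤ M) (m : ℕ) : |psemCoeff γ b t f m| ≤ M / m ! := by
  have hp : 0 < (m : ℝ) + b / γ := by positivity
  have hI := abs_integral_exp_neg_mul_rpow_mul_le (F := fun z => f (γ * z * t)) hp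
    fun z hz => hM _ (by positivity)
  rw [psemCoeff, abs_mul, abs_of_pos (by positivity), one_div_mul_eq_div, div_le_div_iff₀
    (by positivity) (by positivity)]
  calc |∫ z in Ioi 0, exp (-z) * z ^ ((m : ℝ) + b / γ - 1) * f (γ * z * t)| * m !
      ≤ M * Gamma (m + b / γ) * m ! := by gcongr
    _ = M * (m ! * Gamma (m + b / γ)) := by ring

lemma sqrt_mul_abs_mul_one_div_le {c x d M : ℝ} (hc : 0 < c)
    (h : √(x / c) * |d| ≤ M) : √x * |d * (1 / c)| ≤ M / √c := by
  have hsqrt : √x = √c * √(x / c) := by rw [← sqrt_mul hc.le, mul_div_cancel₀ _ hc.ne']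
  rw [le_div_iff₀ (sqrt_pos.mpr hc), hsqrt, abs_mul, abs_of_pos (one_div_pos.mpr hc)]
  calc √c * √(x / c) * (|d| * (1 / c)) * √c = √(x / c) * |d| := by
        field_simp
        rw [sq_sqrt hc.le]
    _ ≤ M := h

/-- Let `γ > 0`, `b > 0`. For every `f ∈ C([0,∞])` and `t > 0`, `P_t^{γ,b} f` is continuously
differentiable on `[0,∞)` and for every `x ≥ 0`,
`√x |(P_t^{γ,b} f)'(x)| ≤ (2√2/√(γt)) ‖f‖_∞`. -/
theorem stmt17 (γ b : ℝ) (hγ : 0 < γ) (hb : 0 < b) (f : ℝ → ℝ)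
    (hf : ContinuousOn f (Set.Ici 0))
    (hlim : ∃ l, Filter.Tendsto f Filter.atTop (nhds l)) (t : ℝ) (ht : 0 < t) :
    ContDiffOn ℝ 1 (Psem γ b t f) (Set.Ici 0) ∧
    ∀ x ≥ (0:ℝ),
      Real.sqrt x * |derivWithin (Psem γ b t f) (Set.Ici 0) x| ≤
        2 * Real.sqrt 2 / Real.sqrt (γ * t) * supIci f := by
  obtain ⟨l, hl⟩ := hlim
  have hc : 0 < γ * t := mul_pos hγ ht
  have ha := abs_psemCoeff_le (M := supIci f) hγ hb ht fun y hy =>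
    le_ciSup (bddAbove_range_abs_of_continuousOn_Ici hf hl) (⟨y, hy⟩ : Ici (0 : ℝ))
  have hP : Psem γ b t f = (fun u => exp (-u) * ∑' m, psemCoeff γ b t f m * u ^ m) ∘
      fun x => x / (γ * t) := funext (psem_eq γ b t f)
  refine ⟨hP ▸ ((contDiff_exp_neg_mul_tsum_mul_pow ha).comp (contDiff_id.div_const _)).contDiffOn,
    fun x hx => ?_⟩
  have hderiv := hP ▸ (hasDerivAt_exp_neg_mul_tsum_mul_pow ha (x / (γ * t))).comp x
    ((hasDerivAt_id x).div_const (γ * t))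
  rw [hderiv.hasDerivWithinAt.derivWithin (uniqueDiffOn_Ici 0 x hx)]
  refine (sqrt_mul_abs_mul_one_div_le hc
    (sqrt_mul_abs_exp_neg_mul_tsum_sub_le ha (by positivity))).trans ?_
  rw [div_mul_eq_mul_div]
  gcongr
  exact le_mul_of_one_le_left (nonneg_of_abs_le_div_factorial ha)
    (by nlinarith [one_le_sqrt.mpr one_le_two])
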